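/- arXiv:1803.06366 — 10 statements merged into one kernel-verified Lean document; each statement's English description precedes it below -/
import Mathlib

section
/- The full relation X × Y is small if and only if X is finite or Y is finite. -/
def IsSmall {X Y : Type*} (ρ : Set (X × Y)) : Prop :=
  ∀ Q ⊆ ρ, ∃ (n : ℕ) (A : Fin n → Set X) (B : Fin n → Set Y),
    Q = ρ ∩ ⋃ i, A i ×ˢ B i

open Set

section

variable {X Y : Type*}

lemma exists_fin_iUnion_prod_eq {ι : Type*} [Finite ι] (A : ι → Set X) (B : ι → Set Y) :
    ∃ (n : ℕ) (A' : Fin n → Set X) (B' : Fin n → Set Y),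
      ⋃ i, A i ×ˢ B i = ⋃ i, A' i ×ˢ B' i := by
  obtain ⟨n, ⟨e⟩⟩ := Finite.exists_equiv_fin ι
  exact ⟨n, A ∘ e.symm, B ∘ e.symm, (e.symm.iSup_comp (g := fun i => A i ×ˢ B i)).symm⟩

lemma isSmall_of_finite_left [Finite X] (ρ : Set (X × Y)) : IsSmall ρ := by
  intro Q hQ
  obtain ⟨n, A, B, hAB⟩ := exists_fin_iUnion_prod_eq (fun x : X => {x}) (fun x => Prod.mk x ⁻¹' Q)
  refine ⟨n, A, B, ?_⟩
  rw [← hAB]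
  ext ⟨x, y⟩
  simp only [mem_inter_iff, mem_iUnion, mem_prod, mem_singleton_iff, mem_preimage]
  exact ⟨fun hxy => ⟨hQ hxy, x, rfl, hxy⟩, by rintro ⟨-, i, rfl, hxy⟩; exact hxy⟩

lemma isSmall_of_finite_right [Finite Y] (ρ : Set (X × Y)) : IsSmall ρ := by
  intro Q hQ
  obtain ⟨n, A, B, hAB⟩ := exists_fin_iUnion_prod_eq (fun y : Y => (·, y) ⁻¹' Q) (fun y => {y})
  refine ⟨n, A, B, ?_⟩
  rw [← hAB]
  ext ⟨x, y⟩
  simp only [mem_inter_iff, mem_iUnion, mem_prod, mem_singleton_iff, mem_preimage]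
  exact ⟨fun hxy => ⟨hQ hxy, y, hxy, rfl⟩, by rintro ⟨-, i, hxy, rfl⟩; exact hxy⟩

lemma subsingleton_of_prod_subset_range_pair {ι : Type*} {f : ι → X} {g : ι → Y}
    (hf : f.Injective) (hg : g.Injective) {A : Set X} {B : Set Y}
    (hAB : A ×ˢ B ⊆ range fun k => (f k, g k)) :
    (A ×ˢ B).Subsingleton := by
  rintro ⟨a, b⟩ hab ⟨a', b'⟩ hab'
  obtain ⟨k, hk⟩ := hAB hab
  obtain ⟨l, hl⟩ := hAB hab'
  obtain ⟨m, hm⟩ := hAB (mk_mem_prod hab.1 hab'.2)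
  simp only [Prod.mk.injEq] at hk hl hm
  have hmk : m = k := hf (hm.1.trans hk.1.symm)
  have hml : m = l := hg (hm.2.trans hl.2.symm)
  rw [← hk.1, ← hk.2, ← hl.1, ← hl.2, ← hmk, ← hml]

/-- The graph of a pair of injections `ℕ → X`, `ℕ → Y` is infinite, yet every rectangle inside
it has at most one point, so it is no finite union of rectangles. -/
lemma not_isSmall_univ [Infinite X] [Infinite Y] : ¬ IsSmall (univ : Set (X × Y)) := by
  intro hsmall
  let f := Infinite.natEmbedding X
  let g := Infinite.natEmbedding Y
  obtain ⟨n, A, B, hQ⟩ := hsmall (range fun k => (f k, g k)) (subset_univ _)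
  rw [univ_inter] at hQ
  have hinf : (range fun k => (f k, g k)).Infinite :=
    infinite_range_of_injective fun k l hkl => f.injective (congrArg Prod.fst hkl)
  have hrect : ∀ i, (A i ×ˢ B i).Subsingleton := fun i =>
    subsingleton_of_prod_subset_range_pair f.injective g.injective
      (hQ ▸ subset_iUnion (fun i => A i ×ˢ B i) i)
  exact hinf (hQ ▸ finite_iUnion fun i => (hrect i).finite)

end

theorem full_rel_small_iff {X Y : Type*} :
    IsSmall (Set.univ : Set (X × Y)) ↔ Finite X ∨ Finite Y := by
  refine ⟨fun hsmall => ?_, ?_⟩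
  · by_contra! ⟨_, _⟩
    exact not_isSmall_univ hsmall
  · rintro (_ | _)
    · exact isSmall_of_finite_left _
    · exact isSmall_of_finite_right _
end

section
/- Let G be a digraph given by maps s, t : E → V, and let ρ denote its adjacency relation. For ultrafilters υ, ω on V, there exists an ultrafilter ξ on E with s(ξ) = υ and t(ξ) = ω if and only if for all A ∈ υ and B ∈ ω there exist a ∈ A, b ∈ B with a ρ b. -/
def Adj {V E : Type*} (s t : E → V) (x y : V) : Prop := ∃ e, s e = x ∧ t e = y

theorem ultrafilter_adjacency_criterion {V E : Type*} (s t : E → V)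
    (υ ω : Ultrafilter V) :
    (∃ ξ : Ultrafilter E, Ultrafilter.map s ξ = υ ∧ Ultrafilter.map t ξ = ω) ↔
      ∀ A ∈ υ, ∀ B ∈ ω, ∃ a ∈ A, ∃ b ∈ B, Adj s t a b := by
  constructor
  · rintro ⟨ξ, hs, ht⟩ A hA B hB
    have h1 : s ⁻¹' A ∈ ξ := by rw [← hs] at hA; exact hA
    have h2 : t ⁻¹' B ∈ ξ := by rw [← ht] at hB; exact hB
    obtain ⟨e, he1, he2⟩ := Ultrafilter.nonempty_of_mem (ξ.inter_mem h1 h2)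
    exact ⟨s e, he1, t e, he2, e, rfl, rfl⟩
  · intro h
    have hne : ((υ : Filter V).comap s ⊓ (ω : Filter V).comap t).NeBot := by
      rw [← Filter.forall_mem_nonempty_iff_neBot]
      intro S hS
      rw [Filter.mem_inf_iff] at hS
      obtain ⟨S1, hS1, S2, hS2, rfl⟩ := hS
      obtain ⟨A, hA, hA'⟩ := Filter.mem_comap.mp hS1
      obtain ⟨B, hB, hB'⟩ := Filter.mem_comap.mp hS2
      obtain ⟨a, ha, b, hb, e, he1, he2⟩ := h A hA B hB
      exact ⟨e, hA' (by simp [he1]; exact he1 ▸ ha), hB' (by simp [he2]; exact he2 ▸ hb)⟩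
    obtain ⟨ξ, hξ⟩ := Filter.exists_ultrafilter_le ((υ : Filter V).comap s ⊓ (ω : Filter V).comap t)
    refine ⟨ξ, ?_, ?_⟩
    · have : (Ultrafilter.map s ξ : Filter V) ≤ υ := by
        rw [Ultrafilter.coe_map, Filter.map_le_iff_le_comap]
        exact hξ.trans inf_le_left
      exact Ultrafilter.coe_injective (υ.unique this)
    · have : (Ultrafilter.map t ξ : Filter V) ≤ ω := by
        rw [Ultrafilter.coe_map, Filter.map_le_iff_le_comap]
        exact hξ.trans inf_le_right
      exact Ultrafilter.coe_injective (ω.unique this)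
end

section
/- Let G, H, K be digraphs on the same vertex set V with adjacency relations satisfying ρ_G ∘ ρ_H = ρ_K. Then the adjacency relations of the ultrafilter extensions satisfy ρ_{βG} ∘ ρ_{βH} = ρ_{βK}. -/
def BAdj {V E : Type*} (s t : E → V) (υ ω : Ultrafilter V) : Prop :=
  ∃ ξ : Ultrafilter E, Ultrafilter.map s ξ = υ ∧ Ultrafilter.map t ξ = ω

lemma badj_iff {V E : Type*} (s t : E → V) (υ ω : Ultrafilter V) :
    BAdj s t υ ω ↔ ∀ A ∈ υ, ∀ B ∈ ω, ∃ e, s e ∈ A ∧ t e ∈ B := by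
  constructor
  · rintro ⟨ξ, rfl, rfl⟩ A hA B hB
    have h1 : s ⁻¹' A ∈ ξ := hA
    have h2 : t ⁻¹' B ∈ ξ := hB
    obtain ⟨e, he⟩ := Ultrafilter.nonempty_of_mem (Filter.inter_mem h1 h2)
    exact ⟨e, he.1, he.2⟩
  · intro hyp
    have hne : (Filter.comap s ↑υ ⊓ Filter.comap t ↑ω).NeBot := by
      apply Filter.forall_mem_nonempty_iff_neBot.mp
      intro U hU
      rw [Filter.mem_inf_iff] at hU
      obtain ⟨P, hP, Q, hQ, rfl⟩ := hU
      obtain ⟨A, hA, hAP⟩ := Filter.mem_comap.mp hP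
      obtain ⟨B, hB, hBQ⟩ := Filter.mem_comap.mp hQ
      obtain ⟨e, he1, he2⟩ := hyp A hA B hB
      exact ⟨e, hAP he1, hBQ he2⟩
    refine ⟨Ultrafilter.of (Filter.comap s ↑υ ⊓ Filter.comap t ↑ω), ?_, ?_⟩
    · have hle : (Ultrafilter.map s (Ultrafilter.of (Filter.comap s ↑υ ⊓ Filter.comap t ↑ω)) : Filter V) ≤ ↑υ := by
        calc (Ultrafilter.map s (Ultrafilter.of (Filter.comap s ↑υ ⊓ Filter.comap t ↑ω)) : Filter V)
            = Filter.map s ↑(Ultrafilter.of (Filter.comap s ↑υ ⊓ Filter.comap t ↑ω)) := rfl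
          _ ≤ Filter.map s (Filter.comap s ↑υ ⊓ Filter.comap t ↑ω) :=
              Filter.map_mono (Ultrafilter.of_le _)
          _ ≤ Filter.map s (Filter.comap s ↑υ) := Filter.map_mono inf_le_left
          _ ≤ ↑υ := Filter.map_comap_le
      exact Ultrafilter.coe_le_coe.mp hle
    · have hle : (Ultrafilter.map t (Ultrafilter.of (Filter.comap s ↑υ ⊓ Filter.comap t ↑ω)) : Filter V) ≤ ↑ω := by
        calc (Ultrafilter.map t (Ultrafilter.of (Filter.comap s ↑υ ⊓ Filter.comap t ↑ω)) : Filter V)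
            = Filter.map t ↑(Ultrafilter.of (Filter.comap s ↑υ ⊓ Filter.comap t ↑ω)) := rfl
          _ ≤ Filter.map t (Filter.comap s ↑υ ⊓ Filter.comap t ↑ω) :=
              Filter.map_mono (Ultrafilter.of_le _)
          _ ≤ Filter.map t (Filter.comap t ↑ω) := Filter.map_mono inf_le_right
          _ ≤ ↑ω := Filter.map_comap_le
      exact Ultrafilter.coe_le_coe.mp hle

theorem beta_composition {V E₁ E₂ E₃ : Type*}
    (s₁ t₁ : E₁ → V) (s₂ t₂ : E₂ → V) (s₃ t₃ : E₃ → V)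
    (h : Relation.Comp (Adj s₁ t₁) (Adj s₂ t₂) = Adj s₃ t₃) :
    Relation.Comp (BAdj s₁ t₁) (BAdj s₂ t₂) = BAdj s₃ t₃ := by
  funext υ χ
  apply propext
  constructor
  · rintro ⟨ω, h1, h2⟩
    rw [badj_iff]
    intro A hA C hC
    -- the set of middle vertices seeing C
    have hB : s₂ '' (t₂ ⁻¹' C) ∈ ω := by
      obtain ⟨ξ₂, rfl, rfl⟩ := h2
      rw [Ultrafilter.mem_map]
      exact Filter.mem_of_superset (hC : t₂ ⁻¹' C ∈ ξ₂) (Set.subset_preimage_image s₂ _)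
    obtain ⟨e₁, he₁A, he₁B⟩ := (badj_iff s₁ t₁ υ ω).mp h1 A hA _ hB
    obtain ⟨e₂, he₂C, he₂⟩ := he₁B
    have hcomp : Relation.Comp (Adj s₁ t₁) (Adj s₂ t₂) (s₁ e₁) (t₂ e₂) :=
      ⟨t₁ e₁, ⟨e₁, rfl, rfl⟩, ⟨e₂, he₂, rfl⟩⟩
    rw [h] at hcomp
    obtain ⟨e₃, he₃s, he₃t⟩ := hcomp
    exact ⟨e₃, he₃s ▸ he₁A, he₃t ▸ he₂C⟩
  · rintro ⟨ξ₃, rfl, rfl⟩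
    have key : ∀ e₃ : E₃, ∃ e₁ e₂, s₁ e₁ = s₃ e₃ ∧ t₁ e₁ = s₂ e₂ ∧ t₂ e₂ = t₃ e₃ := by
      intro e₃
      have : Adj s₃ t₃ (s₃ e₃) (t₃ e₃) := ⟨e₃, rfl, rfl⟩
      rw [← h] at this
      obtain ⟨y, ⟨e₁, he₁s, he₁t⟩, ⟨e₂, he₂s, he₂t⟩⟩ := this
      exact ⟨e₁, e₂, he₁s, he₁t.trans he₂s.symm, he₂t⟩
    choose f₁ f₂ hf1 hf2 hf3 using key
    refine ⟨Ultrafilter.map (s₂ ∘ f₂) ξ₃,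
      ⟨Ultrafilter.map f₁ ξ₃, ?_, ?_⟩, ⟨Ultrafilter.map f₂ ξ₃, ?_, ?_⟩⟩
    · have : s₁ ∘ f₁ = s₃ := funext hf1
      apply Ultrafilter.coe_injective
      simp [Ultrafilter.coe_map, Filter.map_map, this]
    · have : t₁ ∘ f₁ = s₂ ∘ f₂ := funext hf2
      apply Ultrafilter.coe_injective
      simp [Ultrafilter.coe_map, Filter.map_map, this]
    · apply Ultrafilter.coe_injective
      simp [Ultrafilter.coe_map, Filter.map_map]
    · have : t₂ ∘ f₂ = t₃ := funext hf3
      apply Ultrafilter.coe_injective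
      simp [Ultrafilter.coe_map, Filter.map_map, this]
end

section
/- For a digraph G and n ≥ 1, the adjacency relation of β(Gⁿ) equals the n-th relational power of the adjacency relation of βG, where Gⁿ is the digraph on V whose edges are the paths of length n in G. -/
def UAdj {V : Type*} (r : V → V → Prop) (υ ω : Ultrafilter V) : Prop :=
  ∀ A ∈ υ, ∀ B ∈ ω, ∃ a ∈ A, ∃ b ∈ B, r a b

def RelPow {α : Type*} (r : α → α → Prop) : ℕ → α → α → Prop
  | 0 => Eq
  | n + 1 => fun x z => ∃ y, r x y ∧ RelPow r n y z

namespace BetaPowerAux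

variable {V : Type*}

def img (r : V → V → Prop) (A : Set V) : Set V := {b | ∃ a ∈ A, r a b}

lemma img_mono {r : V → V → Prop} {A B : Set V} (h : A ⊆ B) : img r A ⊆ img r B := by
  rintro b ⟨a, ha, hr⟩
  exact ⟨a, h ha, hr⟩

lemma uadj_iff {r : V → V → Prop} {υ ω : Ultrafilter V} :
    UAdj r υ ω ↔ ∀ A ∈ υ, img r A ∈ ω := by
  constructor
  · intro h A hA
    by_contra hc
    rcases h A hA (img r A)ᶜ (Ultrafilter.compl_mem_iff_notMem.mpr hc) with
      ⟨a, ha, b, hb, hr⟩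
    exact hb ⟨a, ha, hr⟩
  · intro h A hA B hB
    have hmem : img r A ∩ B ∈ ω := (ω : Filter V).inter_mem (h A hA) hB
    obtain ⟨b, ⟨a, ha, hr⟩, hbB⟩ := Ultrafilter.nonempty_of_mem hmem
    exact ⟨a, ha, b, hbB, hr⟩

lemma uadj_eq_iff {υ ω : Ultrafilter V} : UAdj Eq υ ω ↔ υ = ω := by
  constructor
  · intro h
    ext A
    constructor
    · intro hA
      by_contra hc
      rcases h A hA Aᶜ (Ultrafilter.compl_mem_iff_notMem.mpr hc) with
        ⟨a, ha, b, hb, rfl⟩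
      exact hb ha
    · intro hA
      by_contra hc
      rcases h Aᶜ (Ultrafilter.compl_mem_iff_notMem.mpr hc) A hA with
        ⟨a, ha, b, hb, rfl⟩
      exact ha hb
  · rintro rfl A hA B hB
    obtain ⟨x, hxA, hxB⟩ := Ultrafilter.nonempty_of_mem ((υ : Filter V).inter_mem hA hB)
    exact ⟨x, hxA, x, hxB, rfl⟩

lemma comp_merge {r q : V → V → Prop} {υ μ ω : Ultrafilter V}
    (h1 : UAdj r υ μ) (h2 : UAdj q μ ω) :
    UAdj (fun x z => ∃ y, r x y ∧ q y z) υ ω := by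
  rw [uadj_iff] at h1 h2 ⊢
  intro A hA
  have := h2 _ (h1 A hA)
  refine (ω : Filter V).mem_of_superset this ?_
  rintro b ⟨c, ⟨a, ha, hr⟩, hq⟩
  exact ⟨a, ha, c, hr, hq⟩

lemma comp_split {r q : V → V → Prop} {υ ω : Ultrafilter V}
    (h : UAdj (fun x z => ∃ y, r x y ∧ q y z) υ ω) :
    ∃ μ : Ultrafilter V, UAdj r υ μ ∧ UAdj q μ ω := by
  rw [uadj_iff] at h
  have himg : ∀ A ∈ υ, img q (img r A) ∈ ω := by
    intro A hA
    refine (ω : Filter V).mem_of_superset (h A hA) ?_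
    rintro b ⟨a, ha, c, hr, hq⟩
    exact ⟨c, ⟨a, ha, hr⟩, hq⟩
  -- filter generated by the images of sets in υ
  let f : Filter V :=
    { sets := {B | ∃ A ∈ υ, img r A ⊆ B}
      univ_sets := ⟨Set.univ, Filter.univ_mem, Set.subset_univ _⟩
      sets_of_superset := by
        rintro B C ⟨A, hA, hsub⟩ hBC
        exact ⟨A, hA, hsub.trans hBC⟩
      inter_sets := by
        rintro B C ⟨A, hA, hsub⟩ ⟨A', hA', hsub'⟩
        refine ⟨A ∩ A', (υ : Filter V).inter_mem hA hA', ?_⟩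
        exact Set.subset_inter ((img_mono Set.inter_subset_left).trans hsub)
          ((img_mono Set.inter_subset_right).trans hsub') }
  -- filter dual to the ideal {C | img q C ∉ ω}
  let g : Filter V :=
    { sets := {B | img q Bᶜ ∉ ω}
      univ_sets := by
        simp only [Set.mem_setOf_eq, Set.compl_univ]
        intro hmem
        obtain ⟨b, a, ha, _⟩ := Ultrafilter.nonempty_of_mem hmem
        exact ha
      sets_of_superset := by
        intro B C hB hBC hmem
        exact hB ((ω : Filter V).mem_of_superset hmem (img_mono (Set.compl_subset_compl.mpr hBC)))
      inter_sets := by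
        intro B C hB hC hmem
        have hsub : img q (B ∩ C)ᶜ ⊆ img q Bᶜ ∪ img q Cᶜ := by
          rintro b ⟨a, ha, hq⟩
          rw [Set.compl_inter] at ha
          rcases ha with ha | ha
          · exact Or.inl ⟨a, ha, hq⟩
          · exact Or.inr ⟨a, ha, hq⟩
        have : img q Bᶜ ∪ img q Cᶜ ∈ ω := (ω : Filter V).mem_of_superset hmem hsub
        rcases Ultrafilter.union_mem_iff.mp this with h' | h'
        · exact hB h'
        · exact hC h' }
  have hne : (f ⊓ g).NeBot := by
    rw [← Filter.forall_mem_nonempty_iff_neBot]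
    intro S hS
    rw [Filter.mem_inf_iff] at hS
    obtain ⟨T, hT, U, hU, rfl⟩ := hS
    obtain ⟨A, hA, hsub⟩ := hT
    have hU' : img q Uᶜ ∉ ω := hU
    by_contra hempty
    rw [Set.not_nonempty_iff_eq_empty] at hempty
    have hrA : img r A ⊆ Uᶜ := by
      intro b hb
      intro hbU
      have : b ∈ T ∩ U := ⟨hsub hb, hbU⟩
      rw [hempty] at this
      exact this
    exact hU' ((ω : Filter V).mem_of_superset (himg A hA) (img_mono hrA))
  obtain ⟨μ, hμ⟩ := Ultrafilter.exists_le (f ⊓ g)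
  have hμf : (f : Filter V) ≤ μ → True := fun _ => trivial
  refine ⟨μ, ?_, ?_⟩
  · rw [uadj_iff]
    intro A hA
    have : img r A ∈ f := ⟨A, hA, le_refl _⟩
    exact (hμ.trans inf_le_left) this
  · rw [uadj_iff]
    intro C hC
    by_contra hc
    have : Cᶜ ∈ g := by
      show img q Cᶜᶜ ∉ ω
      rwa [compl_compl]
    have hCc : Cᶜ ∈ μ := (hμ.trans inf_le_right) this
    exact (Ultrafilter.compl_mem_iff_notMem.mp hCc) hC

lemma beta_power_gen {V : Type*} (r : V → V → Prop) (n : ℕ) (υ ω : Ultrafilter V) :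
    UAdj (RelPow r n) υ ω ↔ RelPow (UAdj r) n υ ω := by
  induction n generalizing υ ω with
  | zero =>
    show UAdj Eq υ ω ↔ υ = ω
    exact uadj_eq_iff
  | succ n ih =>
    constructor
    · intro h
      obtain ⟨μ, h1, h2⟩ := comp_split (r := r) (q := RelPow r n) h
      exact ⟨μ, h1, (ih μ ω).mp h2⟩
    · rintro ⟨μ, h1, h2⟩
      exact comp_merge h1 ((ih μ ω).mpr h2)

end BetaPowerAux

set_option linter.unusedVariables false in
theorem beta_power {V E : Type*} (s t : E → V) (n : ℕ) (hn : 1 ≤ n)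
    (υ ω : Ultrafilter V) :
    UAdj (RelPow (Adj s t) n) υ ω ↔ RelPow (UAdj (Adj s t)) n υ ω :=
  BetaPowerAux.beta_power_gen (Adj s t) n υ ω
end

section
/- Let G be a digraph, x ∈ V, υ an ultrafilter on V, and n ≥ 1. There is a path of length n in βG from the principal ultrafilter [x] to υ if and only if the set x⁽ⁿ⁾ of vertices reachable from x by a path of length n in G belongs to υ. -/
lemma relpow_succ' {α : Type*} (r : α → α → Prop) :
    ∀ (n : ℕ) (x z : α), RelPow r (n + 1) x z ↔ ∃ y, RelPow r n x y ∧ r y z := by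
  intro n
  induction n with
  | zero =>
    intro x z
    constructor
    · rintro ⟨y, hxy, hyz⟩
      exact ⟨x, rfl, hyz ▸ hxy⟩
    · rintro ⟨y, hxy, hyz⟩
      exact ⟨z, hxy ▸ hyz, rfl⟩
  | succ n ih =>
    intro x z
    constructor
    · rintro ⟨y, hxy, hyz⟩
      obtain ⟨w, hw, hwz⟩ := (ih y z).1 hyz
      exact ⟨w, ⟨y, hxy, hw⟩, hwz⟩
    · rintro ⟨w, ⟨y, hxy, hw⟩, hwz⟩
      exact ⟨y, hxy, (ih y z).2 ⟨w, hw, hwz⟩⟩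

lemma uadj_push {V : Type*} {r : V → V → Prop} {ω υ : Ultrafilter V}
    (h : UAdj r ω υ) {A : Set V} (hA : A ∈ ω) :
    {y | ∃ a ∈ A, r a y} ∈ υ := by
  by_contra hc
  have hcompl : {y | ∃ a ∈ A, r a y}ᶜ ∈ υ := (Ultrafilter.compl_mem_iff_notMem).2 hc
  obtain ⟨a, ha, b, hb, hab⟩ := h A hA _ hcompl
  exact hb ⟨a, ha, hab⟩

lemma forward {V : Type*} {r : V → V → Prop} :
    ∀ (n : ℕ) (ω υ : Ultrafilter V) (A : Set V), A ∈ ω →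
      RelPow (UAdj r) n ω υ → {y | ∃ a ∈ A, RelPow r n a y} ∈ υ := by
  intro n
  induction n with
  | zero =>
    intro ω υ A hA h
    have : {y | ∃ a ∈ A, RelPow r 0 a y} = A := by
      ext y; simp [RelPow]
    rw [this]
    exact h ▸ hA
  | succ n ih =>
    intro ω υ A hA h
    obtain ⟨ω', hωω', hrest⟩ := h
    have h1 : {y | ∃ a ∈ A, r a y} ∈ ω' := uadj_push hωω' hA
    have h2 := ih ω' υ _ h1 hrest
    refine υ.sets_of_superset h2 ?_
    rintro z ⟨y, ⟨a, ha, hay⟩, hyz⟩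
    exact ⟨a, ha, y, hay, hyz⟩

lemma backward {V : Type*} {r : V → V → Prop} :
    ∀ (n : ℕ) (x : V) (υ : Ultrafilter V),
      {y | RelPow r (n + 1) x y} ∈ υ → RelPow (UAdj r) (n + 1) (pure x) υ := by
  intro n
  induction n with
  | zero =>
    intro x υ h
    refine ⟨υ, ?_, rfl⟩
    intro A hA B hB
    have hA' : x ∈ A := hA
    have : B ∩ {y | RelPow r 1 x y} ∈ υ := Filter.inter_mem hB h
    obtain ⟨b, hbB, hb⟩ := Filter.nonempty_of_mem this
    obtain ⟨y, hxy, hyz⟩ := hb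
    exact ⟨x, hA', b, hbB, hyz ▸ hxy⟩
  | succ n ih =>
    intro x υ h
    set xn : Set V := {y | RelPow r (n + 1) x y} with hxn
    set Bpre : Set V → Set V := fun B => {z | ∃ b ∈ B, r z b} with hBpre
    -- the filter generated by xn and Bpre B for B ∈ υ
    have hne : ∀ B ∈ υ, (xn ∩ Bpre B).Nonempty := by
      intro B hB
      have : B ∩ {y | RelPow r (n + 2) x y} ∈ υ := Filter.inter_mem hB h
      obtain ⟨y, hyB, hy⟩ := Filter.nonempty_of_mem this
      obtain ⟨z, hz, hzy⟩ := (relpow_succ' r (n + 1) x y).1 hy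
      exact ⟨z, hz, y, hyB, hzy⟩
    let f : Filter V :=
      { sets := {A | ∃ B ∈ υ, xn ∩ Bpre B ⊆ A}
        univ_sets := ⟨Set.univ, Filter.univ_mem, by simp⟩
        sets_of_superset := by
          rintro A A' ⟨B, hB, hsub⟩ hAA'
          exact ⟨B, hB, hsub.trans hAA'⟩
        inter_sets := by
          rintro A A' ⟨B, hB, hsub⟩ ⟨B', hB', hsub'⟩
          refine ⟨B ∩ B', Filter.inter_mem hB hB', ?_⟩
          rintro z ⟨hzxn, b, hbB, hzb⟩
          exact ⟨hsub ⟨hzxn, b, hbB.1, hzb⟩, hsub' ⟨hzxn, b, hbB.2, hzb⟩⟩ }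
    have hfne : f.NeBot := by
      rw [Filter.neBot_iff]
      intro hbot
      have : (∅ : Set V) ∈ f := hbot ▸ Filter.mem_bot
      obtain ⟨B, hB, hsub⟩ := this
      obtain ⟨z, hz⟩ := hne B hB
      exact hsub hz
    let ω : Ultrafilter V := @Ultrafilter.of V f hfne
    have hωf : (ω : Filter V) ≤ f := Ultrafilter.of_le f
    have hxnω : xn ∈ ω := hωf ⟨Set.univ, Filter.univ_mem, Set.inter_subset_left⟩
    have hstep : RelPow (UAdj r) (n + 1) (pure x) ω := ih x ω hxnω
    have hlast : UAdj r ω υ := by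
      intro A hA B hB
      have hBpreω : Bpre B ∈ ω := hωf ⟨B, hB, Set.inter_subset_right⟩
      obtain ⟨a, haA, b, hbB, hab⟩ := Filter.nonempty_of_mem (Filter.inter_mem hA hBpreω)
      exact ⟨a, haA, b, hbB, hab⟩
    exact (relpow_succ' (UAdj r) (n + 1) (pure x) υ).2 ⟨ω, hstep, hlast⟩

theorem path_from_principal {V E : Type*} (s t : E → V) (x : V)
    (υ : Ultrafilter V) (n : ℕ) (hn : 1 ≤ n) :
    RelPow (UAdj (Adj s t)) n (pure x) υ ↔ {y | RelPow (Adj s t) n x y} ∈ υ := by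
  obtain ⟨m, rfl⟩ : ∃ m, n = m + 1 := ⟨n - 1, (Nat.succ_pred_eq_of_pos hn).symm⟩
  constructor
  · intro h
    have := forward (r := Adj s t) (m + 1) (pure x) υ {x} rfl h
    refine υ.sets_of_superset this ?_
    rintro y ⟨a, (rfl : a = x), hay⟩
    exact hay
  · exact backward m x υ
end

section
/- A digraph G is pseudocomplete (i.e., s × t : E → V × V is surjective) if and only if βG is pseudocomplete (i.e., βs × βt : βE → βV × βV is surjective). -/
theorem pseudocomplete_iff {V E : Type*} (s t : E → V) :
    Function.Surjective (fun e : E => (s e, t e)) ↔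
      Function.Surjective
        (fun ξ : Ultrafilter E => (Ultrafilter.map s ξ, Ultrafilter.map t ξ)) := by
  constructor
  · intro hsurj p
    obtain ⟨u, v⟩ := p
    set F : Filter E := Filter.comap (fun e : E => (s e, t e)) (↑u ×ˢ ↑v) with hF
    have hne : F.NeBot := by
      apply Filter.comap_neBot
      intro S hS
      obtain ⟨x, hx⟩ := Filter.nonempty_of_mem hS
      obtain ⟨e, he⟩ := hsurj x
      exact ⟨e, by simpa [he] using hx⟩
    let ξ := Ultrafilter.of F
    have hle : ↑ξ ≤ F := Ultrafilter.of_le F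
    have hs : (↑ξ : Filter E) ≤ Filter.comap s ↑u := by
      refine hle.trans ?_
      rw [hF, Filter.prod_eq_inf, Filter.comap_inf, Filter.comap_comap, Filter.comap_comap]
      exact inf_le_left
    have ht : (↑ξ : Filter E) ≤ Filter.comap t ↑v := by
      refine hle.trans ?_
      rw [hF, Filter.prod_eq_inf, Filter.comap_inf, Filter.comap_comap, Filter.comap_comap]
      exact inf_le_right
    refine ⟨ξ, ?_⟩
    have h1 : (Ultrafilter.map s ξ : Filter V) = ↑u :=
      Ultrafilter.unique u (Filter.map_le_iff_le_comap.2 hs)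
    have h2 : (Ultrafilter.map t ξ : Filter V) = ↑v :=
      Ultrafilter.unique v (Filter.map_le_iff_le_comap.2 ht)
    simp only [Prod.mk.injEq]
    exact ⟨Ultrafilter.coe_injective h1, Ultrafilter.coe_injective h2⟩
  · intro hsurj p
    obtain ⟨u, v⟩ := p
    obtain ⟨ξ, hξ⟩ := hsurj (pure u, pure v)
    simp only [Prod.mk.injEq] at hξ
    have hs : s ⁻¹' {u} ∈ ξ := by
      have h : ({u} : Set V) ∈ Ultrafilter.map s ξ := by
        rw [hξ.1]; exact Ultrafilter.mem_pure.2 rfl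
      exact Ultrafilter.mem_map.1 h
    have ht : t ⁻¹' {v} ∈ ξ := by
      have h : ({v} : Set V) ∈ Ultrafilter.map t ξ := by
        rw [hξ.2]; exact Ultrafilter.mem_pure.2 rfl
      exact Ultrafilter.mem_map.1 h
    obtain ⟨e, he1, he2⟩ := Filter.nonempty_of_mem (Filter.inter_mem hs ht)
    exact ⟨e, Prod.ext he1 he2⟩
end

section
/- Let G be a digraph in which every vertex has out-degree (number of distinct successors) at most d, where d is a finite natural number. Then every ultrafilter vertex of βG has at most d successors in βG; hence the maximum out-degree of βG equals that of G. -/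
lemma beta_key {V E : Type*} (s t : E → V) (d : ℕ)
    (h : ∀ x : V, {y | Adj s t x y}.Finite ∧ {y | Adj s t x y}.ncard ≤ d)
    (υ : Ultrafilter V) :
    {ω | UAdj (Adj s t) υ ω}.Finite ∧ {ω | UAdj (Adj s t) υ ω}.ncard ≤ d := by
  classical
  set l : V → List V := fun x => (h x).1.toFinset.toList with hl
  have hlen : ∀ x, (l x).length ≤ d := by
    intro x
    have h2 := (h x).2
    rw [Set.ncard_eq_toFinset_card _ (h x).1] at h2
    simpa [hl] using h2
  set f : Fin d → V → V := fun i x => (l x).getD i x with hf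
  have hcov : ∀ x y, Adj s t x y → ∃ i : Fin d, f i x = y := by
    intro x y hxy
    have hy : y ∈ l x := by
      simp only [hl, Finset.mem_toList, Set.Finite.mem_toFinset]
      exact hxy
    obtain ⟨j, hj, hyj⟩ := List.mem_iff_getElem.1 hy
    refine ⟨⟨j, lt_of_lt_of_le hj (hlen x)⟩, ?_⟩
    simp [hf, List.getD_eq_getElem, hj, hyj]
  have hsub : {ω | UAdj (Adj s t) υ ω} ⊆
      Set.range (fun i : Fin d => Ultrafilter.map (f i) υ) := by
    intro ω hω
    by_contra hne
    rw [Set.mem_range] at hne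
    push_neg at hne
    have hexB : ∀ i : Fin d, ∃ B ∈ ω, {x | f i x ∈ B} ∉ υ := by
      intro i
      by_contra hc
      push_neg at hc
      apply hne i
      have hle : (Ultrafilter.map (f i) υ : Filter V) ≤ (ω : Filter V) := by
        intro B hB
        exact hc B hB
      exact Ultrafilter.coe_le_coe.1 hle
    choose B hBω hBυ using hexB
    have hAi : ∀ i : Fin d, {x | f i x ∉ B i} ∈ υ := by
      intro i
      have : {x | f i x ∈ B i}ᶜ ∈ υ := Ultrafilter.compl_mem_iff_notMem.2 (hBυ i)
      simpa [Set.compl_setOf] using this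
    have hA : (⋂ i, {x | f i x ∉ B i}) ∈ υ := by
      exact Filter.iInter_mem.2 hAi
    have hB : (⋂ i, B i) ∈ ω := Filter.iInter_mem.2 hBω
    obtain ⟨a, ha, b, hb, hab⟩ := hω _ hA _ hB
    obtain ⟨i, hi⟩ := hcov a b hab
    have h1 : f i a ∉ B i := Set.mem_iInter.1 ha i
    have h2 : b ∈ B i := Set.mem_iInter.1 hb i
    exact h1 (hi ▸ h2)
  have hfin : (Set.range (fun i : Fin d => Ultrafilter.map (f i) υ)).Finite :=
    Set.finite_range _
  refine ⟨hfin.subset hsub, ?_⟩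
  calc {ω | UAdj (Adj s t) υ ω}.ncard
      ≤ (Set.range (fun i : Fin d => Ultrafilter.map (f i) υ)).ncard :=
        Set.ncard_le_ncard hsub hfin
    _ ≤ (Set.univ : Set (Fin d)).ncard := by
        rw [← Set.image_univ]
        exact Set.ncard_image_le Set.finite_univ
    _ = d := by simp [Set.ncard_univ]

theorem beta_outdegree {V E : Type*} (s t : E → V) (d : ℕ)
    (h : ∀ x : V, {y | Adj s t x y}.Finite ∧ {y | Adj s t x y}.ncard ≤ d) :
    (∀ υ : Ultrafilter V,
        {ω | UAdj (Adj s t) υ ω}.Finite ∧ {ω | UAdj (Adj s t) υ ω}.ncard ≤ d) ∧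
    (⨆ υ : Ultrafilter V, {ω | UAdj (Adj s t) υ ω}.ncard) =
      ⨆ x : V, {y | Adj s t x y}.ncard := by
  refine ⟨beta_key s t d h, ?_⟩
  set D := ⨆ x : V, {y | Adj s t x y}.ncard with hD
  have hbddR : BddAbove (Set.range fun x : V => {y | Adj s t x y}.ncard) := by
    refine ⟨d, ?_⟩
    rintro _ ⟨x, rfl⟩
    exact (h x).2
  have h' : ∀ x : V, {y | Adj s t x y}.Finite ∧ {y | Adj s t x y}.ncard ≤ D :=
    fun x => ⟨(h x).1, le_ciSup hbddR x⟩
  have hbddL : BddAbove (Set.range fun υ : Ultrafilter V =>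
      {ω | UAdj (Adj s t) υ ω}.ncard) := by
    refine ⟨d, ?_⟩
    rintro _ ⟨υ, rfl⟩
    exact (beta_key s t d h υ).2
  apply le_antisymm
  · cases isEmpty_or_nonempty V with
    | inl hV =>
      haveI : IsEmpty (Ultrafilter V) :=
        ⟨fun υ => (Filter.nonempty_of_mem (f := (υ : Filter V)) Filter.univ_mem).elim
          fun x _ => hV.false x⟩
      rw [ciSup_of_empty]
      exact Nat.zero_le _
    | inr hV =>
      exact ciSup_le fun υ => (beta_key s t D h' υ).2
  · cases isEmpty_or_nonempty V with
    | inl hV =>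
      rw [hD, ciSup_of_empty]
      exact Nat.zero_le _
    | inr hV =>
      refine ciSup_le fun x => ?_
      have him : (fun y => (pure y : Ultrafilter V)) '' {y | Adj s t x y} ⊆
          {ω | UAdj (Adj s t) (pure x) ω} := by
        rintro _ ⟨y, hy, rfl⟩ A hA B hB
        exact ⟨x, Ultrafilter.mem_pure.1 hA, y, Ultrafilter.mem_pure.1 hB, hy⟩
      have hinj : Function.Injective (fun y => (pure y : Ultrafilter V)) :=
        fun a b hab =>
          ((by simpa using congrArg (fun u : Ultrafilter V => ({a} : Set V) ∈ u) hab :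
            b = a)).symm
      calc {y | Adj s t x y}.ncard
          = ((fun y => (pure y : Ultrafilter V)) '' {y | Adj s t x y}).ncard :=
            (Set.ncard_image_of_injective _ hinj).symm
        _ ≤ {ω | UAdj (Adj s t) (pure x) ω}.ncard :=
            Set.ncard_le_ncard him (beta_key s t d h (pure x)).1
        _ ≤ ⨆ υ : Ultrafilter V, {ω | UAdj (Adj s t) υ ω}.ncard :=
            le_ciSup hbddL (pure x)
end

section
/- Let G be a digraph and c : V → C a colouring with C finite (i.e., no edge has both endpoints the same colour). Then the pushforward map βc : βV → C (identifying βC with C since C is finite) is a colouring of βG: for every ultrafilter edge ξ ∈ βE, βc(βs(ξ)) ≠ βc(βt(ξ)). Hence χ(βG) = χ(G) when either is finite. -/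
private lemma beta_key_s17 {E C : Type*} [Finite C] {f g : E → C}
    (h : ∀ e, f e ≠ g e) (ξ : Ultrafilter E) :
    Ultrafilter.map f ξ ≠ Ultrafilter.map g ξ := by
  intro heq
  obtain ⟨x, hx⟩ := (Ultrafilter.map f ξ).eq_pure_of_finite
  have hf : {e | f e = x} ∈ ξ := by
    have : {x} ∈ Ultrafilter.map f ξ := by rw [hx]; exact Ultrafilter.mem_pure.mpr rfl
    simpa [Ultrafilter.mem_map, Set.preimage] using this
  have hg : {e | g e = x} ∈ ξ := by
    have : {x} ∈ Ultrafilter.map g ξ := by rw [← heq, hx]; exact Ultrafilter.mem_pure.mpr rfl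
    simpa [Ultrafilter.mem_map, Set.preimage] using this
  obtain ⟨e, he1, he2⟩ := Ultrafilter.nonempty_of_mem (Filter.inter_mem hf hg)
  exact h e (he1.trans he2.symm)

theorem beta_colouring {V E C : Type*} [Finite C] (s t : E → V) (c : V → C)
    (hc : ∀ e : E, c (s e) ≠ c (t e)) :
    (∀ ξ : Ultrafilter E,
        Ultrafilter.map c (Ultrafilter.map s ξ) ≠
          Ultrafilter.map c (Ultrafilter.map t ξ)) ∧
    (∀ n : ℕ,
        (∃ c' : V → Fin n, ∀ e : E, c' (s e) ≠ c' (t e)) ↔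
          (∃ c'' : Ultrafilter V → Fin n, ∀ ξ : Ultrafilter E,
            c'' (Ultrafilter.map s ξ) ≠ c'' (Ultrafilter.map t ξ))) := by
  constructor
  · intro ξ
    have := beta_key_s17 (f := c ∘ s) (g := c ∘ t) hc ξ
    simpa [← Ultrafilter.map_map] using this
  · intro n
    constructor
    · rintro ⟨c', hc'⟩
      refine ⟨fun ν => Classical.choose (Ultrafilter.map c' ν).eq_pure_of_finite, fun ξ hne => ?_⟩
      have hs := Classical.choose_spec (Ultrafilter.map c' (Ultrafilter.map s ξ)).eq_pure_of_finite
      have ht := Classical.choose_spec (Ultrafilter.map c' (Ultrafilter.map t ξ)).eq_pure_of_finite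
      have : Ultrafilter.map c' (Ultrafilter.map s ξ) = Ultrafilter.map c' (Ultrafilter.map t ξ) := by
        rw [hs, ht]; exact congrArg pure hne
      have key := beta_key_s17 (f := c' ∘ s) (g := c' ∘ t) hc' ξ
      exact key (by simpa [← Ultrafilter.map_map] using this)
    · rintro ⟨c'', hc''⟩
      refine ⟨fun v => c'' (pure v), fun e h => ?_⟩
      have := hc'' (pure e)
      simp only [Ultrafilter.map_pure] at this
      exact this h
end

section
/- Let G be a digraph. βG has no loops (no ultrafilter edge ξ with βs(ξ) = βt(ξ)) if and only if G admits a colouring with finitely many colours. -/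
theorem beta_loopfree_iff_finitely_colourable {V E : Type*} (s t : E → V) :
    (∀ ξ : Ultrafilter E, Ultrafilter.map s ξ ≠ Ultrafilter.map t ξ) ↔
      ∃ (n : ℕ) (c : V → Fin n), ∀ e : E, c (s e) ≠ c (t e) := by
  classical
  constructor
  · intro h
    by_contra hc
    push_neg at hc
    set S : Set (Set E) := Set.range (fun A : Set V => {e | s e ∈ A ↔ t e ∈ A}) with hS
    have hne : (Filter.generate S).NeBot := by
      rw [Filter.generate_neBot_iff]
      intro T hTS hTfin
      by_contra hempty
      rw [Set.not_nonempty_iff_eq_empty] at hempty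
      haveI : Fintype T := hTfin.fintype
      -- For each B ∈ T choose A with E_A = B
      have hA : ∀ B : T, ∃ A : Set V, {e | s e ∈ A ↔ t e ∈ A} = (B : Set E) := fun B =>
        hTS B.2
      choose A hAeq using hA
      let c : V → (T → Bool) := fun v B => decide (v ∈ A B)
      obtain ⟨e, he⟩ := hc (Fintype.card (T → Bool))
        ((Fintype.equivFin (T → Bool)) ∘ c)
      have hce : c (s e) = c (t e) := (Fintype.equivFin (T → Bool)).injective he
      have : e ∈ ⋂₀ T := by
        intro B hB
        have := congrFun hce ⟨B, hB⟩
        simp only [c, decide_eq_decide] at this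
        have : e ∈ {e | s e ∈ A ⟨B, hB⟩ ↔ t e ∈ A ⟨B, hB⟩} := this
        rwa [hAeq ⟨B, hB⟩] at this
      rw [hempty] at this
      exact this
    let ξ : Ultrafilter E := @Ultrafilter.of E (Filter.generate S) hne
    have hEA : ∀ A : Set V, {e | s e ∈ A ↔ t e ∈ A} ∈ ξ := fun A =>
      Ultrafilter.of_le _ (Filter.mem_generate_of_mem ⟨A, rfl⟩)
    refine h ξ (Ultrafilter.coe_injective (Filter.ext fun A => ?_))
    simp only [Ultrafilter.coe_map, Filter.mem_map]
    constructor
    · intro hs'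
      have : s ⁻¹' A ∩ {e | s e ∈ A ↔ t e ∈ A} ∈ ξ := Filter.inter_mem hs' (hEA A)
      exact Filter.mem_of_superset this (fun e ⟨h1, h2⟩ => h2.mp h1)
    · intro ht'
      have : t ⁻¹' A ∩ {e | s e ∈ A ↔ t e ∈ A} ∈ ξ := Filter.inter_mem ht' (hEA A)
      exact Filter.mem_of_superset this (fun e ⟨h1, h2⟩ => h2.mpr h1)
  · rintro ⟨n, c, hc⟩ ξ heq
    have huniv : (⋃ i ∈ (Set.univ : Set (Fin n)), (fun e => c (s e)) ⁻¹' {i}) ∈ ξ := by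
      have : (⋃ i ∈ (Set.univ : Set (Fin n)), (fun e => c (s e)) ⁻¹' {i}) = Set.univ := by
        ext e; simp
      rw [this]; exact Filter.univ_mem
    obtain ⟨i, -, hi⟩ :=
      (Ultrafilter.finite_biUnion_mem_iff (Set.finite_univ)).mp huniv
    have hti : t ⁻¹' (c ⁻¹' {i}) ∈ ξ := by
      have hmem : c ⁻¹' {i} ∈ Ultrafilter.map s ξ := hi
      rw [heq] at hmem
      exact hmem
    have : (s ⁻¹' (c ⁻¹' {i}) ∩ t ⁻¹' (c ⁻¹' {i})) ∈ ξ := Filter.inter_mem hi hti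
    obtain ⟨e, h1, h2⟩ := ξ.nonempty_of_mem this
    exact hc e (by simp at h1 h2; rw [h1, h2])
end

section
/- Let G be a digraph on vertex set V. Then βG is proper (βs and βt are jointly injective on βE) if and only if G is proper (s × t : E → V × V is injective) and the adjacency relation of G, regarded as a subset of V × V, is a small relation. -/
/-
The map ξ ↦ (s_*ξ, t_*ξ) factors as pushforward along f = (s, t) : E → V × V followed by the
marginal map β(V × V) → βV × βV. Pushforward along f is injective iff f is, and its image consists
of the ultrafilters containing the adjacency relation ρ = range f. So it remains to see that the
marginal map is injective on ultrafilters containing ρ iff ρ is small. Ultrafilters with the same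
marginals agree on rectangles, hence on finite unions of rectangles, and therefore (when both
contain ρ) on every Q ⊆ ρ if ρ is small. Conversely, if Q ⊆ ρ is not of the form ρ ∩ (finite
union of rectangles), then no finite family of rectangles separates Q from ρ \ Q, since otherwise
Q would be ρ ∩ (union of the atoms of the family meeting Q), and those atoms are rectangles. By the
finite intersection property, some ultrafilter on pairs (p, q) ∈ Q × (ρ \ Q) makes p and q agree
on every rectangle; its two projections are distinct ultrafilters with the same marginals.
-/

open Set Filter

namespace Ultrafilter

variable {X Y : Type*}

def marginals (μ : Ultrafilter (X × Y)) : Ultrafilter X × Ultrafilter Y :=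
  (μ.map Prod.fst, μ.map Prod.snd)

theorem prod_mem_iff {μ : Ultrafilter (X × Y)} {A : Set X} {B : Set Y} :
    A ×ˢ B ∈ μ ↔ A ∈ μ.map Prod.fst ∧ B ∈ μ.map Prod.snd := by
  rw [Set.prod_eq, mem_map, mem_map, ← mem_coe, inter_mem_iff]; rfl

theorem marginals_eq_iff {μ ν : Ultrafilter (X × Y)} :
    μ.marginals = ν.marginals ↔ ∀ A B, A ×ˢ B ∈ μ ↔ A ×ˢ B ∈ ν := by
  refine ⟨fun h A B => ?_, fun h => ?_⟩
  · simp only [marginals, Prod.ext_iff] at h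
    rw [prod_mem_iff, prod_mem_iff, h.1, h.2]
  · refine Prod.ext (Ultrafilter.ext fun A => ?_) (Ultrafilter.ext fun B => ?_)
    · simpa [marginals, mem_map, prod_univ] using h A univ
    · simpa [marginals, mem_map, univ_prod] using h univ B

theorem iUnion_mem_iff {ι : Type*} [Finite ι] {μ : Ultrafilter X} {S : ι → Set X} :
    (⋃ i, S i) ∈ μ ↔ ∃ i, S i ∈ μ := by
  simpa using finite_biUnion_mem_iff (f := μ) (s := S) finite_univ

theorem map_injective_iff {E V : Type*} {f : E → V} :
    Function.Injective (map f) ↔ Function.Injective f := by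
  refine ⟨fun h x y hxy => pure_injective (h (by rw [map_pure, map_pure, hxy])),
    fun hf μ ν hμν => eq_of_le fun S hS => ?_⟩
  have : f '' S ∈ map f μ := by
    rw [hμν]; exact mem_map.2 (mem_of_superset hS (subset_preimage_image f S))
  rwa [mem_map, hf.preimage_image] at this

theorem range_map {E V : Type*} (f : E → V) : range (map f) = {μ | range f ∈ μ} := by
  ext μ
  refine ⟨?_, fun h => ⟨_, ofComapInfPrincipal_eq_of_map (s := univ) (by rwa [image_univ])⟩⟩
  rintro ⟨ξ, rfl⟩
  show range f ∈ map f ξ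
  rw [mem_map, preimage_range]
  exact univ_mem

end Ultrafilter

section IsSmall

variable {X Y : Type*} {ρ : Set (X × Y)}

theorem IsSmall.injOn_marginals (hρ : IsSmall ρ) :
    InjOn Ultrafilter.marginals {μ : Ultrafilter (X × Y) | ρ ∈ μ} := by
  intro μ hμ ν hν hμν
  rw [Ultrafilter.marginals_eq_iff] at hμν
  refine Ultrafilter.eq_of_le fun S hS => ?_
  obtain ⟨n, A, B, hQ⟩ := hρ (ρ ∩ S) inter_subset_left
  have hρSν : ρ ∩ S ∈ ν := inter_mem hν hS
  have hρSμ : ρ ∩ S ∈ μ := by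
    rw [hQ] at hρSν ⊢
    obtain ⟨i, hi⟩ := Ultrafilter.iUnion_mem_iff.1 (mem_of_superset hρSν inter_subset_right)
    exact inter_mem hμ (mem_of_superset ((hμν _ _).2 hi) (subset_iUnion (fun i => A i ×ˢ B i) i))
  exact mem_of_superset hρSμ inter_subset_right

theorem exists_preimage_prodMap_eq_iUnion_prod {α β : Type*} [Finite α] [Finite β]
    (f : X → α) (g : Y → β) (S : Set (α × β)) :
    ∃ (n : ℕ) (A : Fin n → Set X) (B : Fin n → Set Y),
      Prod.map f g ⁻¹' S = ⋃ i, A i ×ˢ B i := by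
  obtain ⟨n, ⟨e⟩⟩ := Finite.exists_equiv_fin (α × β)
  refine ⟨n, fun i => {x | f x = (e.symm i).1 ∧ e.symm i ∈ S}, fun i => g ⁻¹' {(e.symm i).2}, ?_⟩
  ext ⟨x, y⟩
  simp only [mem_preimage, Prod.map, mem_iUnion, mem_prod, mem_singleton_iff]
  constructor
  · intro h
    exact ⟨e (f x, g y), by simpa using h⟩
  · rintro ⟨i, ⟨hx, hi⟩, hy⟩
    rwa [hx, hy]

theorem exists_unseparated_of_ne_inter_iUnion_prod {Q : Set (X × Y)} (hQρ : Q ⊆ ρ)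
    (hQ : ∀ (n : ℕ) (A : Fin n → Set X) (B : Fin n → Set Y), Q ≠ ρ ∩ ⋃ i, A i ×ˢ B i)
    (𝒞 : Finset (Set X × Set Y)) :
    ∃ p ∈ Q, ∃ q ∈ ρ \ Q, ∀ c ∈ 𝒞, p ∈ c.1 ×ˢ c.2 ↔ q ∈ c.1 ×ˢ c.2 := by
  by_contra hsep
  -- `Prod.map f g` records which rectangles of `𝒞` contain a point; its fibres are the atoms.
  let f (x : X) (c : 𝒞) : Prop := x ∈ c.1.1
  let g (y : Y) (c : 𝒞) : Prop := y ∈ c.1.2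
  obtain ⟨n, A, B, hAB⟩ := exists_preimage_prodMap_eq_iUnion_prod f g (Prod.map f g '' Q)
  refine hQ n A B ?_
  rw [← hAB]
  refine Subset.antisymm (fun q hq => ⟨hQρ hq, subset_preimage_image _ _ hq⟩) ?_
  rintro q ⟨hqρ, p, hpQ, hpq⟩
  by_contra hqQ
  refine hsep ⟨p, hpQ, q, ⟨hqρ, hqQ⟩, fun c hc => ?_⟩
  have h1 : (p.1 ∈ c.1) = (q.1 ∈ c.1) := congrFun (congrArg Prod.fst hpq) ⟨c, hc⟩
  have h2 : (p.2 ∈ c.2) = (q.2 ∈ c.2) := congrFun (congrArg Prod.snd hpq) ⟨c, hc⟩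
  rw [mem_prod, mem_prod, h1, h2]

theorem Ultrafilter.exists_marginals_eq_of_unseparated {Q R : Set (X × Y)}
    (h : ∀ 𝒞 : Finset (Set X × Set Y),
      ∃ p ∈ Q, ∃ q ∈ R, ∀ c ∈ 𝒞, p ∈ c.1 ×ˢ c.2 ↔ q ∈ c.1 ×ˢ c.2) :
    ∃ μ ν : Ultrafilter (X × Y), Q ∈ μ ∧ R ∈ ν ∧ μ.marginals = ν.marginals := by
  classical
  let D (𝒞 : Finset (Set X × Set Y)) : Set ((X × Y) × (X × Y)) :=
    {pq | pq.1 ∈ Q ∧ pq.2 ∈ R ∧ ∀ c ∈ 𝒞, pq.1 ∈ c.1 ×ˢ c.2 ↔ pq.2 ∈ c.1 ×ˢ c.2}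
  have hD : Antitone fun 𝒞 => 𝓟 (D 𝒞) := fun 𝒞 𝒞' h𝒞 =>
    principal_mono.2 fun pq hpq => ⟨hpq.1, hpq.2.1, fun c hc => hpq.2.2 c (h𝒞 hc)⟩
  have : (⨅ 𝒞, 𝓟 (D 𝒞)).NeBot := iInf_neBot_of_directed' hD.directed_ge fun 𝒞 =>
    principal_neBot_iff.2 <| let ⟨p, hp, q, hq, hpq⟩ := h 𝒞; ⟨(p, q), hp, hq, hpq⟩
  let θ := Ultrafilter.of (⨅ 𝒞, 𝓟 (D 𝒞))
  have hθ (𝒞) : D 𝒞 ∈ θ := Ultrafilter.of_le _ (mem_iInf_of_mem 𝒞 (mem_principal_self _))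
  refine ⟨θ.map Prod.fst, θ.map Prod.snd, mem_map.2 (mem_of_superset (hθ ∅) fun pq hpq => hpq.1),
    mem_map.2 (mem_of_superset (hθ ∅) fun pq hpq => hpq.2.1), marginals_eq_iff.2 fun A B => ?_⟩
  rw [mem_map, mem_map]
  constructor <;> intro hAB <;> filter_upwards [hAB, hθ {(A, B)}] with pq hpq hagree
  · exact (hagree.2.2 _ (Finset.mem_singleton_self _)).1 hpq
  · exact (hagree.2.2 _ (Finset.mem_singleton_self _)).2 hpq

theorem isSmall_iff_injOn_marginals :
    IsSmall ρ ↔ InjOn Ultrafilter.marginals {μ : Ultrafilter (X × Y) | ρ ∈ μ} := by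
  refine ⟨IsSmall.injOn_marginals, fun hinj Q hQρ => ?_⟩
  by_contra! hQ
  obtain ⟨μ, ν, hQμ, hdiffν, hμν⟩ := Ultrafilter.exists_marginals_eq_of_unseparated
    (exists_unseparated_of_ne_inter_iUnion_prod hQρ hQ)
  have hμ : ρ ∈ μ := mem_of_superset hQμ hQρ
  have hν : ρ ∈ ν := mem_of_superset hdiffν sdiff_subset
  have hQν : Q ∈ ν := hinj hμ hν hμν ▸ hQμ
  exact Ultrafilter.empty_notMem (inter_sdiff_self Q ρ ▸ inter_mem hQν hdiffν)

end IsSmall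

theorem adj_eq_range {V E : Type*} (s t : E → V) :
    {p : V × V | Adj s t p.1 p.2} = range fun e => (s e, t e) := by
  ext ⟨x, y⟩
  simp [Adj, Prod.ext_iff]

theorem beta_proper_iff {V E : Type*} (s t : E → V) :
    Function.Injective
        (fun ξ : Ultrafilter E => (Ultrafilter.map s ξ, Ultrafilter.map t ξ)) ↔
      Function.Injective (fun e : E => (s e, t e)) ∧
        IsSmall {p : V × V | Adj s t p.1 p.2} := by
  set f : E → V × V := fun e => (s e, t e)
  have hβ : (fun ξ : Ultrafilter E => (Ultrafilter.map s ξ, Ultrafilter.map t ξ)) =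
      Ultrafilter.marginals ∘ Ultrafilter.map f := by
    ext1 ξ
    simp only [Function.comp, Ultrafilter.marginals, Ultrafilter.map_map]
    rfl
  rw [hβ, adj_eq_range, isSmall_iff_injOn_marginals, ← Ultrafilter.range_map,
    ← Ultrafilter.map_injective_iff (f := f)]
  exact ⟨fun h => ⟨h.of_comp, h.injOn_range⟩, fun ⟨hf, hΦ⟩ => (hΦ.injective_iff _ subset_rfl).2 hf⟩
end
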